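/- arXiv:math/9901010 — 3 statements merged into one kernel-verified Lean document; each statement's English description precedes it below -/
import Mathlib

section
/- Let 𝓛 be a commuting family of m holomorphic vector fields on a complex manifold with flow (w,q) ↦ 𝓛_w(q), let Γ : W' → 𝓜 be a holomorphic map from an open subset of ℂ^{m'} with Γ(0) = 0, and define φ(w, w') := 𝓛_w(Γ(w')). Then φ attains its maximal (generic) rank at some point of the form (0, w'^*): that is, sup over (w,w') of rank dφ_{(w,w')} = sup over w' of rank dφ_{(0,w')}. -/
/-
Translating the flow parameter commutes with the flow: `φ (w + v, w') = 𝓛_v (φ (w, w'))`. By the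
chain rule `dφ_(w,w') = d(𝓛_w)_(φ(0,w')) ∘ dφ_(0,w')`, so the rank of `dφ` at `(w, w')`
is at most its rank at `(0, w')`. The ranks are bounded by the dimension of the target, so the
supremum is attained at some `(w, w'*)`, hence also at `(0, w'*)`.
-/

/-- The complexification `𝓜 = {(w,z,ζ,ξ) : z = ξ + i Θ̄(w,ζ,ξ)}`. -/
def MM (m d : ℕ)
    (Θb : ((Fin m → ℂ) × (Fin m → ℂ) × (Fin d → ℂ)) → Fin d → ℂ) :
    Set ((Fin m → ℂ) × (Fin d → ℂ) × (Fin m → ℂ) × (Fin d → ℂ)) :=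
  {q | ∀ k, q.2.1 k = q.2.2.2 k + Complex.I * Θb (q.1, q.2.2.1, q.2.2.2) k}

/-- The joint flow `𝓛_w` of the commuting family `𝓛`. -/
def Lflow (m d : ℕ)
    (Θb : ((Fin m → ℂ) × (Fin m → ℂ) × (Fin d → ℂ)) → Fin d → ℂ)
    (w : Fin m → ℂ)
    (p : (Fin m → ℂ) × (Fin d → ℂ) × (Fin m → ℂ) × (Fin d → ℂ)) :
    (Fin m → ℂ) × (Fin d → ℂ) × (Fin m → ℂ) × (Fin d → ℂ) :=
  (p.1 + w, fun k => p.2.2.2 k + Complex.I * Θb (p.1 + w, p.2.2.1, p.2.2.2) k,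
   p.2.2.1, p.2.2.2)

theorem finrank_range_fderiv_add_le {𝕜 E F : Type*} [NontriviallyNormedField 𝕜]
    [NormedAddCommGroup E] [NormedSpace 𝕜 E] [NormedAddCommGroup F] [NormedSpace 𝕜 F]
    {f : E → F} {g : F → F} {a x : E} (hfg : (fun y => f (y + a)) = g ∘ f)
    (hf : DifferentiableAt 𝕜 f x) (hg : DifferentiableAt 𝕜 g (f x))
    [FiniteDimensional 𝕜 (LinearMap.range (fderiv 𝕜 f x).toLinearMap)] :
    Module.finrank 𝕜 (LinearMap.range (fderiv 𝕜 f (x + a)).toLinearMap) ≤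
      Module.finrank 𝕜 (LinearMap.range (fderiv 𝕜 f x).toLinearMap) := by
  have hchain : fderiv 𝕜 f (x + a) = (fderiv 𝕜 g (f x)).comp (fderiv 𝕜 f x) := by
    rw [← fderiv_comp_add_right, hfg, fderiv_comp x hg hf]
  rw [hchain, ContinuousLinearMap.toLinearMap_comp, LinearMap.range_comp]
  exact Submodule.finrank_map_le _ _

section Lflow

variable {m d : ℕ} {Θb : ((Fin m → ℂ) × (Fin m → ℂ) × (Fin d → ℂ)) → Fin d → ℂ}

theorem Lflow_Lflow (w v : Fin m → ℂ)
    (p : (Fin m → ℂ) × (Fin d → ℂ) × (Fin m → ℂ) × (Fin d → ℂ)) :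
    Lflow m d Θb w (Lflow m d Θb v p) = Lflow m d Θb (v + w) p := by
  simp [Lflow, add_assoc]

theorem differentiable_Lflow (hΘb : Differentiable ℂ Θb) (w : Fin m → ℂ) :
    Differentiable ℂ (Lflow m d Θb w) := by
  unfold Lflow; fun_prop

theorem differentiable_Lflow_comp {m' : ℕ} (hΘb : Differentiable ℂ Θb)
    {Γ : (Fin m' → ℂ) → (Fin m → ℂ) × (Fin d → ℂ) × (Fin m → ℂ) × (Fin d → ℂ)}
    (hΓ : Differentiable ℂ Γ) :
    Differentiable ℂ
      (fun x : (Fin m → ℂ) × (Fin m' → ℂ) => Lflow m d Θb x.1 (Γ x.2)) := by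
  unfold Lflow; fun_prop

end Lflow

theorem stmt_16_general (m d m' : ℕ)
    (Θb : ((Fin m → ℂ) × (Fin m → ℂ) × (Fin d → ℂ)) → Fin d → ℂ)
    (hΘb : Differentiable ℂ Θb)
    (Γ : (Fin m' → ℂ) →
      ((Fin m → ℂ) × (Fin d → ℂ) × (Fin m → ℂ) × (Fin d → ℂ)))
    (hΓ : Differentiable ℂ Γ) :
    let φ : ((Fin m → ℂ) × (Fin m' → ℂ)) →
        ((Fin m → ℂ) × (Fin d → ℂ) × (Fin m → ℂ) × (Fin d → ℂ)) :=
      fun x => Lflow m d Θb x.1 (Γ x.2)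
    let rk : ((Fin m → ℂ) × (Fin m' → ℂ)) → ℕ := fun x =>
      Module.finrank ℂ (LinearMap.range (fderiv ℂ φ x).toLinearMap)
    ∃ w'star : Fin m' → ℂ,
      rk ((0 : Fin m → ℂ), w'star) = sSup {k | ∃ x, rk x = k} := by
  intro φ rk
  have hφ : Differentiable ℂ φ := differentiable_Lflow_comp hΘb hΓ
  have rk_le : ∀ w w', rk (w, w') ≤ rk (0, w') := fun w w' => by
    have hshift : (fun x => φ (x + (w, 0))) = Lflow m d Θb w ∘ φ := by
      funext x
      simp only [φ, Function.comp_apply, Prod.fst_add, Prod.snd_add, add_zero,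
        Lflow_Lflow]
    have := finrank_range_fderiv_add_le (x := (0, w')) hshift (hφ _)
      (differentiable_Lflow hΘb w _)
    rwa [Prod.mk_add_mk, zero_add, add_zero] at this
  set ranks := {k | ∃ x, rk x = k}
  have hbdd : BddAbove ranks :=
    ⟨Module.finrank ℂ ((Fin m → ℂ) × (Fin d → ℂ) × (Fin m → ℂ) × (Fin d → ℂ)),
      by rintro k ⟨x, rfl⟩; exact Submodule.finrank_le _⟩
  obtain ⟨x, hx⟩ : sSup ranks ∈ ranks := Nat.sSup_mem ⟨rk 0, 0, rfl⟩ hbdd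
  exact ⟨x.2, le_antisymm (le_csSup hbdd ⟨_, rfl⟩) (hx ▸ rk_le x.1 x.2)⟩

/-- for `φ(w,w') := 𝓛_w(Γ(w'))` with `Γ` holomorphic,
`Γ(0) = 0` and `Γ` valued in `𝓜`, the map `φ` attains its maximal (generic)
rank at some point of the form `(0, w'^*)`. -/
theorem stmt_16 (m d m' : ℕ)
    (Θb : ((Fin m → ℂ) × (Fin m → ℂ) × (Fin d → ℂ)) → Fin d → ℂ)
    (hΘb : Differentiable ℂ Θb)
    (Γ : (Fin m' → ℂ) →
      ((Fin m → ℂ) × (Fin d → ℂ) × (Fin m → ℂ) × (Fin d → ℂ)))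
    (hΓ : Differentiable ℂ Γ) (hΓ0 : Γ 0 = 0)
    (hΓM : ∀ w', Γ w' ∈ MM m d Θb) :
    let φ : ((Fin m → ℂ) × (Fin m' → ℂ)) →
        ((Fin m → ℂ) × (Fin d → ℂ) × (Fin m → ℂ) × (Fin d → ℂ)) :=
      fun x => Lflow m d Θb x.1 (Γ x.2)
    let rk : ((Fin m → ℂ) × (Fin m' → ℂ)) → ℕ := fun x =>
      Module.finrank ℂ (LinearMap.range (fderiv ℂ φ x).toLinearMap)
    ∃ w'star : Fin m' → ℂ,
      rk ((0 : Fin m → ℂ), w'star) = sSup {k | ∃ x, rk x = k} :=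
  stmt_16_general m d m' Θb hΘb Γ hΓ
end

section
/- For the hypersurface M ⊂ ℂ^2 with complexification 𝓜 = {(w,z,ζ,ξ) : z = ξ + i w²ζ², ξ = z − i ζ² w²} (i.e. M : z = z̄ + i w² w̄²), the fifth concatenated flow map Γ_5 at the origin, viewed in coordinates (w, ζ, ξ) on 𝓜, is a submersion onto 𝓜 at the point (w₁*, w₂*, 0, −w₂*, −w₁*) for any w₁* ≠ 0, w₂* ≠ 0; moreover Γ_5(w₁*, w₂*, 0, −w₂*, −w₁*) = 0. -/
/-!
At `p = (w₁*, w₂*, 0, -w₂*, -w₁*)` the flows cancel pairwise, so `Γ₅(p) = 0`. Since `w₂ + w₄`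
vanishes at `p`, the squared term `i[(w₂+w₄)(w₁+w₃)]²` has zero differential there, and the
`ξ`-row of the Jacobian reduces to `2i w₁* (w₂*)² dw₃`. The columns of `w₃, w₄, w₅` then form
a triangular minor with determinant `2i w₁* (w₂*)² ≠ 0`.
-/

open ContinuousLinearMap Complex

section VanishingFactor

variable {𝕜 E 𝔸 : Type*} [NontriviallyNormedField 𝕜] [NormedCommRing 𝔸] [NormedAlgebra 𝕜 𝔸]
  [NormedAddCommGroup E] [NormedSpace 𝕜 E] {f g : E → 𝔸} {f' g' : E →L[𝕜] 𝔸} {x : E}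

theorem HasFDerivAt.pow_of_eq_zero (hf : HasFDerivAt f f' x) (hx : f x = 0) {n : ℕ}
    (hn : 2 ≤ n) : HasFDerivAt (fun y => f y ^ n) (0 : E →L[𝕜] 𝔸) x :=
  (hf.pow n).congr_fderiv <| by ext; simp [hx, zero_pow (by omega : n - 1 ≠ 0)]

theorem HasFDerivAt.mul_of_right_eq_zero (hg : HasFDerivAt g g' x) (hf : HasFDerivAt f f' x)
    (hx : f x = 0) : HasFDerivAt (fun y => g y * f y) (g x • f') x :=
  (hg.fun_mul hf).congr_fderiv <| by ext; simp [hx]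

end VanishingFactor

/-- The `(w, ζ, ξ)`-coordinates on `𝓜` of `Γ₅(w₁, …, w₅)`, with `wₖ₊₁` stored at index `k`. -/
def gammaFive (v : Fin 5 → ℂ) : Fin 3 → ℂ :=
  ![v 0 + v 2 + v 4,
    v 1 + v 3,
    I * v 1 ^ 2 * (v 2 ^ 2 + 2 * v 0 * v 2) - I * ((v 1 + v 3) * (v 0 + v 2)) ^ 2]

def gammaFiveJacobian (a b : ℂ) : Matrix (Fin 3) (Fin 5) ℂ :=
  !![1, 0, 1, 0, 1;
     0, 1, 0, 1, 0;
     0, 0, 2 * I * a * b ^ 2, 0, 0]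

theorem gammaFive_eq_zero (a b : ℂ) : gammaFive ![a, b, 0, -b, -a] = 0 := by
  ext i
  fin_cases i <;> simp [gammaFive]

theorem hasFDerivAt_gammaFive (a b : ℂ) :
    HasFDerivAt gammaFive (Matrix.toLin' (gammaFiveJacobian a b)).toContinuousLinearMap
      ![a, b, 0, -b, -a] := by
  set p : Fin 5 → ℂ := ![a, b, 0, -b, -a]
  have hw (i : Fin 5) := hasFDerivAt_apply (𝕜 := ℂ) i p
  have hquad : HasFDerivAt (fun v : Fin 5 → ℂ => v 2 ^ 2 + 2 * v 0 * v 2)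
      ((2 * a) • (proj 2 : (Fin 5 → ℂ) →L[ℂ] ℂ)) p :=
    (((hw 2).pow 2).fun_add (((hw 0).const_mul 2).fun_mul (hw 2))).congr_fderiv <| by
      ext u; simp [p]
  have hξ : HasFDerivAt (fun v : Fin 5 → ℂ =>
      I * v 1 ^ 2 * (v 2 ^ 2 + 2 * v 0 * v 2) - I * ((v 1 + v 3) * (v 0 + v 2)) ^ 2)
      ((2 * I * a * b ^ 2) • (proj 2 : (Fin 5 → ℂ) →L[ℂ] ℂ)) p := by
    have hsq := (((hw 1).fun_add (hw 3)).fun_mul ((hw 0).fun_add (hw 2))).pow_of_eq_zero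
      (by simp [p]) le_rfl
    refine ((((hw 1).pow 2).const_mul I).mul_of_right_eq_zero hquad (by simp [p])).fun_sub
      (hsq.const_mul I) |>.congr_fderiv ?_
    ext u
    simp [p]
    ring
  refine hasFDerivAt_pi'.2 fun i => ?_
  fin_cases i <;>
    [refine (((hw 0).fun_add (hw 2)).fun_add (hw 4)).congr_fderiv ?_;
     refine ((hw 1).fun_add (hw 3)).congr_fderiv ?_;
     refine hξ.congr_fderiv ?_] <;>
    ext u <;> simp [gammaFiveJacobian, dotProduct, Fin.sum_univ_five]

theorem mulVec_gammaFiveJacobian_surjective {a b : ℂ} (ha : a ≠ 0) (hb : b ≠ 0) :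
    Function.Surjective (gammaFiveJacobian a b).mulVec := by
  intro x
  have hc : 2 * I * a * b ^ 2 ≠ 0 := by simp [ha, hb]
  refine ⟨![0, 0, x 2 / (2 * I * a * b ^ 2), x 1, x 0 - x 2 / (2 * I * a * b ^ 2)], ?_⟩
  ext i
  fin_cases i <;>
    simp [gammaFiveJacobian, Matrix.mulVec, dotProduct, Fin.sum_univ_five, mul_div_cancel₀ _ hc]

/-- for `M : z = z̄ + i w² w̄²` in `ℂ²`, the fifth Segre chain
map `Γ₅`, viewed in coordinates `(w,ζ,ξ)` on the 3-dimensional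
complexification `𝓜`, satisfies `Γ₅(w₁*, w₂*, 0, −w₂*, −w₁*) = 0` and is a
submersion onto `𝓜` there, for any `w₁* ≠ 0`, `w₂* ≠ 0`. -/
theorem stmt_18 :
    let G : (Fin 5 → ℂ) → (Fin 3 → ℂ) := fun v =>
      ![v 0 + v 2 + v 4,
        v 1 + v 3,
        Complex.I * (v 1) ^ 2 * ((v 2) ^ 2 + 2 * v 0 * v 2)
          - Complex.I * ((v 1 + v 3) * (v 0 + v 2)) ^ 2]
    ∀ a b : ℂ, a ≠ 0 → b ≠ 0 →
      G ![a, b, 0, -b, -a] = 0 ∧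
      Function.Surjective (fderiv ℂ G ![a, b, 0, -b, -a]) := by
  intro G a b ha hb
  change gammaFive _ = 0 ∧ Function.Surjective (fderiv ℂ gammaFive _)
  rw [(hasFDerivAt_gammaFive a b).fderiv]
  exact ⟨gammaFive_eq_zero a b, mulVec_gammaFiveJacobian_surjective ha hb⟩
end

section
/- For the same hypersurface M : z = z̄ + i w² w̄² in ℂ^2, there exists no point w_{(4)}* ∈ ℂ^4 with Γ_4(w_{(4)}*) = 0 at which the differential of Γ_4 has rank 3. Hence the map Γ_4 is never a submersion onto 𝓜 at a preimage of the base point, showing that the odd length 2μ_p − 1 = 5 in the minimality criterion is optimal for this example. -/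
/-!
At a zero of `Γ₄` (with `wₖ = v (k - 1)`) we have `w₃ = -w₁`, and the middle component
`i w₂² w₃ (w₃ + 2w₁)` factors as a product of two functions that both vanish there
(`w₂ · (i w₂ w₃ (w₃ + 2w₁))` if `w₂ = 0`, and `(i w₂² (w₃ + 2w₁)) · w₃` if `w₁ = w₃ = 0`).
By the product rule its differential vanishes, so the image of `dΓ₄` misses the
`z`-direction and `dΓ₄` has rank at most 2.
-/

open ContinuousLinearMap

theorem hasFDerivAt_mul_zero_of_eq_zero {𝕜 E : Type*} [NontriviallyNormedField 𝕜]
    [NormedAddCommGroup E] [NormedSpace 𝕜 E] {f g : E → 𝕜} {x : E}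
    (hf : DifferentiableAt 𝕜 f x) (hg : DifferentiableAt 𝕜 g x) (hfx : f x = 0) (hgx : g x = 0) :
    HasFDerivAt (f * g) (0 : E →L[𝕜] 𝕜) x := by
  refine (hf.hasFDerivAt.mul hg.hasFDerivAt).congr_fderiv ?_
  ext u
  simp [hfx, hgx]

theorem not_surjective_of_proj_comp_eq_zero {𝕜 E ι : Type*} [NontriviallyNormedField 𝕜]
    [NormedAddCommGroup E] [NormedSpace 𝕜 E] [DecidableEq ι] {L : E →L[𝕜] (ι → 𝕜)} (i : ι)
    (hL : proj i ∘L L = 0) : ¬ Function.Surjective L := by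
  intro hsurj
  obtain ⟨u, hu⟩ := hsurj (Pi.single i 1)
  have : L u i = 0 := by simpa using congrArg (· u) hL
  simp [hu] at this

def segreChainMap₄ (v : Fin 4 → ℂ) : Fin 3 → ℂ :=
  ![v 0 + v 2,
    Complex.I * (v 1) ^ 2 * ((v 2) ^ 2 + 2 * v 0 * v 2),
    v 1 + v 3]

theorem segreChainMap₄_eq_zero {v : Fin 4 → ℂ} (hv : segreChainMap₄ v = 0) :
    v 1 = 0 ∨ (v 0 = 0 ∧ v 2 = 0) := by
  have hv₀ : v 0 + v 2 = 0 := congrFun hv 0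
  have hv₁ : Complex.I * (v 1) ^ 2 * ((v 2) ^ 2 + 2 * v 0 * v 2) = 0 := congrFun hv 1
  have h₀ : v 2 = -v 0 := by linear_combination hv₀
  have h₁ : Complex.I * (v 1 * v 0) ^ 2 = 0 := by
    linear_combination -hv₁ + Complex.I * v 1 ^ 2 * (v 0 + v 2) * hv₀
  rcases mul_eq_zero.mp (pow_eq_zero_iff two_ne_zero |>.mp
    ((mul_eq_zero.mp h₁).resolve_left Complex.I_ne_zero)) with h | h
  · exact .inl h
  · exact .inr ⟨h, by rw [h₀, h, neg_zero]⟩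

theorem differentiable_segreChainMap₄ : Differentiable ℂ segreChainMap₄ := by
  intro v
  rw [differentiableAt_pi]
  intro i
  fin_cases i <;>
    simp only [segreChainMap₄, Fin.zero_eta, Fin.mk_one, Fin.reduceFinMk, Matrix.cons_val_zero,
      Matrix.cons_val_one, Matrix.cons_val] <;>
    fun_prop

theorem hasFDerivAt_segreChainMap₄_one_of_eq_zero {v : Fin 4 → ℂ} (hv : segreChainMap₄ v = 0) :
    HasFDerivAt (fun w => segreChainMap₄ w 1) (0 : (Fin 4 → ℂ) →L[ℂ] ℂ) v := by
  rcases segreChainMap₄_eq_zero hv with h₁ | ⟨h₀, h₂⟩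
  · have hfg : (fun w => segreChainMap₄ w 1) =
        (fun w => w 1) * fun w => Complex.I * w 1 * ((w 2) ^ 2 + 2 * w 0 * w 2) := by
      ext w
      simp only [segreChainMap₄, Matrix.cons_val_one, Matrix.cons_val_zero, Pi.mul_apply]
      ring
    rw [hfg]
    exact hasFDerivAt_mul_zero_of_eq_zero (by fun_prop) (by fun_prop) h₁ (by simp [h₁])
  · have hfg : (fun w => segreChainMap₄ w 1) =
        (fun w => Complex.I * (w 1) ^ 2 * (w 2 + 2 * w 0)) * fun w => w 2 := by
      ext w
      simp only [segreChainMap₄, Matrix.cons_val_one, Matrix.cons_val_zero, Pi.mul_apply]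
      ring
    rw [hfg]
    exact hasFDerivAt_mul_zero_of_eq_zero (by fun_prop) (by fun_prop) (by simp [h₀, h₂]) h₂

/-- for `M : z = z̄ + i w² w̄²` in `ℂ²`, the fourth Segre chain
map `Γ₄`, viewed in coordinates `(w,z,ζ)` on the 3-dimensional
complexification `𝓜`, is never a submersion at a preimage of the base
point: there is no `w_{(4)}*` with `Γ₄(w_{(4)}*) = 0` at which the
differential of `Γ₄` has rank 3.  Hence the odd length `2μ_p − 1 = 5` in the
minimality criterion is optimal for this example. -/
theorem stmt_19 :
    let G : (Fin 4 → ℂ) → (Fin 3 → ℂ) := fun v =>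
      ![v 0 + v 2,
        Complex.I * (v 1) ^ 2 * ((v 2) ^ 2 + 2 * v 0 * v 2),
        v 1 + v 3]
    ¬ ∃ v : Fin 4 → ℂ, G v = 0 ∧ Function.Surjective (fderiv ℂ G v) := by
  rintro G ⟨v, hv, hsurj⟩
  change segreChainMap₄ v = 0 at hv
  change Function.Surjective (fderiv ℂ segreChainMap₄ v) at hsurj
  have hproj : proj 1 ∘L fderiv ℂ segreChainMap₄ v = 0 :=
    (hasFDerivAt_pi'.mp (differentiable_segreChainMap₄ v).hasFDerivAt 1).unique
      (hasFDerivAt_segreChainMap₄_one_of_eq_zero hv)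
  exact not_surjective_of_proj_comp_eq_zero 1 hproj hsurj
end
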